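/- arXiv:1505.04096 — 2 statements merged into one kernel-verified Lean document; each statement's English description precedes it below -/
import Mathlib

section
/- Let s₁,s₂,t₁,t₂>0 satisfy s₁+t₁ ≥ 1, s₂+t₂ ≥ 1, s₁ ≤ s₂ and t₂ ≤ t₁, and let A be a real d×d matrix. If F ∈ 𝒮^{s₁,s₂}_{t₁,t₂}(ℝ^d×ℝ^d), then the function G(x,y) = F(x+Ay, y) also belongs to 𝒮^{s₁,s₂}_{t₁,t₂}(ℝ^d×ℝ^d). -/
open MeasureTheory Real Complex Finset Filter

noncomputable section

/-- `ℝ^d` with the Euclidean norm. -/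
abbrev E (d : ℕ) := EuclideanSpace ℝ (Fin d)

/-- The partial derivative in the coordinate direction `i`. -/
def pdi {d : ℕ} (i : Fin d) (f : E d → ℂ) : E d → ℂ :=
  fun x => fderiv ℝ f x (EuclideanSpace.single i 1)

/-- The iterated partial derivative `∂^α` along a multi-index `α`. -/
def pdm {d : ℕ} (α : Fin d → ℕ) (f : E d → ℂ) : E d → ℂ :=
  List.foldr (fun i g => (pdi i)^[α i] g) f (List.finRange d)

/-- The multi-index factorial `α!`. -/
def mfact {d : ℕ} (α : Fin d → ℕ) : ℕ := ∏ i, Nat.factorial (α i)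

/-- The multi-index length `|α|`. -/
def msize {d : ℕ} (α : Fin d → ℕ) : ℕ := ∑ i, α i

/-- Partial derivative in direction `i` of the first group of variables. -/
def pdi1 {d₁ d₂ : ℕ} (i : Fin d₁) (f : E d₁ × E d₂ → ℂ) : E d₁ × E d₂ → ℂ :=
  fun x => fderiv ℝ f x (EuclideanSpace.single i 1, 0)

/-- Partial derivative in direction `i` of the second group of variables. -/
def pdi2 {d₁ d₂ : ℕ} (i : Fin d₂) (f : E d₁ × E d₂ → ℂ) : E d₁ × E d₂ → ℂ :=
  fun x => fderiv ℝ f x (0, EuclideanSpace.single i 1)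

/-- The iterated partial derivative `∂_{x₁}^{α₁} ∂_{x₂}^{α₂}`. -/
def pdm2 {d₁ d₂ : ℕ} (α₁ : Fin d₁ → ℕ) (α₂ : Fin d₂ → ℕ) (f : E d₁ × E d₂ → ℂ) :
    E d₁ × E d₂ → ℂ :=
  List.foldr (fun i g => (pdi1 i)^[α₁ i] g)
    (List.foldr (fun i g => (pdi2 i)^[α₂ i] g) f (List.finRange d₂)) (List.finRange d₁)

/-- Membership in the Gelfand–Shilov space `𝒮^{s₁,s₂}_{t₁,t₂}(ℝ^d × ℝ^d)`. -/
def GelfandShilov2 (d : ℕ) (s₁ s₂ t₁ t₂ : ℝ) (F : E d × E d → ℂ) : Prop :=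
  ContDiff ℝ (⊤ : ℕ∞) F ∧ ∃ C > (0:ℝ), ∃ h > (0:ℝ),
    ∀ (α₁ α₂ β₁ β₂ : Fin d → ℕ) (x : E d × E d),
      (∏ i, |x.1 i| ^ β₁ i) * (∏ i, |x.2 i| ^ β₂ i) * ‖pdm2 α₁ α₂ F x‖ ≤
        C * h ^ (msize α₁ + msize α₂ + msize β₁ + msize β₂) *
          (mfact α₁ : ℝ) ^ s₁ * (mfact α₂ : ℝ) ^ s₂ *
          (mfact β₁ : ℝ) ^ t₁ * (mfact β₂ : ℝ) ^ t₂


open scoped ContDiff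

section aux
variable {d : ℕ}

abbrev X (d : ℕ) := E d × E d

/-- directional derivative operator -/
def Dop {d : ℕ} (v : X d) (f : X d → ℂ) : X d → ℂ := fun x => fderiv ℝ f x v

section core
variable {v w : X d} {f g : X d → ℂ}

lemma Dop_contDiff {f : X d → ℂ} (hf : ContDiff ℝ ∞ f) (v : X d) :
    ContDiff ℝ ∞ (Dop v f) := by
  have h1 : ContDiff ℝ ∞ (fderiv ℝ f) := hf.fderiv_right (by simp)
  exact (ContinuousLinearMap.apply ℝ ℂ v).contDiff.comp h1

lemma Dop_comm {f : X d → ℂ} (hf : ContDiff ℝ ∞ f) (v w : X d) :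
    Dop v (Dop w f) = Dop w (Dop v f) := by
  funext x
  have hdf : Differentiable ℝ f := hf.differentiable (by simp)
  have h1 : ContDiff ℝ ∞ (fderiv ℝ f) := hf.fderiv_right (by simp)
  have hx : HasFDerivAt (fderiv ℝ f) (fderiv ℝ (fderiv ℝ f) x) x :=
    ((h1.differentiable (by simp)) x).hasFDerivAt
  have hsymm := second_derivative_symmetric (fun y => (hdf y).hasFDerivAt) hx v w
  have comp : ∀ u : X d, fderiv ℝ (fun y => fderiv ℝ f y u) x
      = (ContinuousLinearMap.apply ℝ ℂ u).comp (fderiv ℝ (fderiv ℝ f) x) := by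
    intro u
    exact ((ContinuousLinearMap.apply ℝ ℂ u).hasFDerivAt.comp x hx).fderiv
  show fderiv ℝ (fun y => fderiv ℝ f y w) x v = fderiv ℝ (fun y => fderiv ℝ f y v) x w
  rw [comp w, comp v]
  simpa using hsymm

lemma Dop_add {f g : X d → ℂ} (hf : Differentiable ℝ f) (hg : Differentiable ℝ g) :
    Dop v (fun x => f x + g x) = fun x => Dop v f x + Dop v g x := by
  funext x
  show fderiv ℝ (fun y => f y + g y) x v = _
  rw [fderiv_fun_add (hf x) (hg x)]
  rfl

lemma Dop_smul {f : X d → ℂ} (hf : Differentiable ℝ f) (c : ℝ) :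
    Dop v (fun x => c • f x) = fun x => c • Dop v f x := by
  funext x
  show fderiv ℝ (fun y => c • f y) x v = _
  rw [fderiv_fun_const_smul (hf x)]
  rfl

lemma Dop_zero : Dop v (fun _ : X d => (0:ℂ)) = fun _ => (0:ℂ) := by
  funext x
  show fderiv ℝ (fun _ => (0:ℂ)) x v = 0
  rw [fderiv_fun_const]
  rfl



def w1 (i : Fin d) : X d := (EuclideanSpace.single i 1, 0)
def w2 (i : Fin d) : X d := (0, EuclideanSpace.single i 1)

lemma pdi1_eq (i : Fin d) : (pdi1 i : (X d → ℂ) → X d → ℂ) = Dop (w1 i) := rfl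
lemma pdi2_eq (i : Fin d) : (pdi2 i : (X d → ℂ) → X d → ℂ) = Dop (w2 i) := rfl


def Pl (w : Fin d → X d) (α : Fin d → ℕ) (l : List (Fin d)) (f : X d → ℂ) : X d → ℂ :=
  List.foldr (fun i g => (Dop (w i))^[α i] g) f l

lemma Pl_cons (w : Fin d → X d) (α : Fin d → ℕ) (j : Fin d) (t : List (Fin d)) :
    Pl w α (j :: t) f = (Dop (w j))^[α j] (Pl w α t f) := rfl

lemma iter_contDiff (hf : ContDiff ℝ ∞ f) (v : X d) (n : ℕ) :
    ContDiff ℝ ∞ ((Dop v)^[n] f) := by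
  induction n generalizing f with
  | zero => exact hf
  | succ n ih => rw [Function.iterate_succ_apply]; exact ih (Dop_contDiff hf v)

lemma Pl_contDiff (w : Fin d → X d) (α : Fin d → ℕ) (l : List (Fin d))
    (hf : ContDiff ℝ ∞ f) : ContDiff ℝ ∞ (Pl w α l f) := by
  induction l generalizing f with
  | nil => exact hf
  | cons j t ih => exact iter_contDiff (ih hf) _ _

lemma Dop_iter_comm (hf : ContDiff ℝ ∞ f) (v w : X d) (n : ℕ) :
    Dop v ((Dop w)^[n] f) = (Dop w)^[n] (Dop v f) := by
  induction n generalizing f with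
  | zero => rfl
  | succ n ih =>
    rw [Function.iterate_succ_apply, Function.iterate_succ_apply,
      ih (Dop_contDiff hf w), Dop_comm hf v w]

lemma Dop_Pl_comm (w : Fin d → X d) (α : Fin d → ℕ) (l : List (Fin d))
    (hf : ContDiff ℝ ∞ f) (v : X d) :
    Dop v (Pl w α l f) = Pl w α l (Dop v f) := by
  induction l generalizing f with
  | nil => rfl
  | cons j t ih =>
    show Dop v ((Dop (w j))^[α j] (Pl w α t f)) = (Dop (w j))^[α j] (Pl w α t (Dop v f))
    rw [Dop_iter_comm (Pl_contDiff w α t hf) v (w j), ih hf]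

lemma Pl_congr (w : Fin d → X d) {α α' : Fin d → ℕ} (l : List (Fin d))
    (h : ∀ j ∈ l, α j = α' j) : Pl w α l f = Pl w α' l f := by
  induction l generalizing f with
  | nil => rfl
  | cons j t ih =>
    show (Dop (w j))^[α j] (Pl w α t f) = (Dop (w j))^[α' j] (Pl w α' t f)
    rw [h j List.mem_cons_self, ih (fun k hk => h k (List.mem_cons_of_mem _ hk))]

lemma Pl_zero (w : Fin d → X d) (l : List (Fin d)) : Pl w (fun _ => 0) l f = f := by
  induction l generalizing f with
  | nil => rfl
  | cons j t ih => exact ih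

lemma Pl_insert (w : Fin d → X d) (α : Fin d → ℕ) {l : List (Fin d)} {i : Fin d}
    (hf : ContDiff ℝ ∞ f) (hl : l.Nodup) (hi : i ∈ l) :
    Pl w (α + Pi.single i 1) l f = Pl w α l (Dop (w i) f) := by
  induction l generalizing f with
  | nil => simp at hi
  | cons j t ih =>
    rcases List.nodup_cons.1 hl with ⟨hjt, hnd⟩
    by_cases hji : j = i
    · subst hji
      have hit : j ∉ t := hjt
      rw [Pl_cons, Pl_cons]
      have h1 : Pl w (α + Pi.single j 1) t f = Pl w α t f :=
        Pl_congr w t (fun k hk => by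
          have : k ≠ j := fun hkj => hit (hkj ▸ hk)
          simp [Pi.single_apply, this])
      have h2 : (α + Pi.single j 1 : Fin d → ℕ) j = α j + 1 := by simp
      rw [h1, h2, Function.iterate_succ_apply, ← Dop_Pl_comm w α t hf (w j)]
    · have hit : i ∈ t := by
        rcases List.mem_cons.1 hi with h | h
        · exact absurd h.symm hji
        · exact h
      rw [Pl_cons, Pl_cons]
      have h2 : (α + Pi.single i 1 : Fin d → ℕ) j = α j := by simp [Pi.single_apply, hji]
      rw [h2, ih hf hnd hit]



section part2
variable {d : ℕ} {v : X d} {f g : X d → ℂ}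

lemma Dop_add' (hf : ContDiff ℝ ∞ f) (hg : ContDiff ℝ ∞ g) :
    Dop v (fun x => f x + g x) = fun x => Dop v f x + Dop v g x :=
  Dop_add (hf.differentiable (by simp)) (hg.differentiable (by simp))
lemma Dop_smul' (hf : ContDiff ℝ ∞ f) (c : ℝ) :
    Dop v (fun x => c • f x) = fun x => c • Dop v f x :=
  Dop_smul (hf.differentiable (by simp)) c

lemma iter_add (hf : ContDiff ℝ ∞ f) (hg : ContDiff ℝ ∞ g) (n : ℕ) :
    (Dop v)^[n] (fun x => f x + g x) = fun x => (Dop v)^[n] f x + (Dop v)^[n] g x := by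
  induction n generalizing f g with
  | zero => rfl
  | succ n ih =>
    rw [Function.iterate_succ_apply, Function.iterate_succ_apply,
      Function.iterate_succ_apply, Dop_add' hf hg,
      ih (Dop_contDiff hf v) (Dop_contDiff hg v)]

lemma iter_smul (hf : ContDiff ℝ ∞ f) (c : ℝ) (n : ℕ) :
    (Dop v)^[n] (fun x => c • f x) = fun x => c • (Dop v)^[n] f x := by
  induction n generalizing f with
  | zero => rfl
  | succ n ih =>
    rw [Function.iterate_succ_apply, Function.iterate_succ_apply,
      Dop_smul' hf c, ih (Dop_contDiff hf v)]

lemma Pl_add (w : Fin d → X d) (α : Fin d → ℕ) (l : List (Fin d))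
    (hf : ContDiff ℝ ∞ f) (hg : ContDiff ℝ ∞ g) :
    Pl w α l (fun x => f x + g x) = fun x => Pl w α l f x + Pl w α l g x := by
  induction l generalizing f g with
  | nil => rfl
  | cons j t ih =>
    rw [Pl_cons, Pl_cons, Pl_cons, ih hf hg,
      iter_add (Pl_contDiff w α t hf) (Pl_contDiff w α t hg)]

lemma Pl_smul (w : Fin d → X d) (α : Fin d → ℕ) (l : List (Fin d))
    (hf : ContDiff ℝ ∞ f) (c : ℝ) :
    Pl w α l (fun x => c • f x) = fun x => c • Pl w α l f x := by
  induction l generalizing f with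
  | nil => rfl
  | cons j t ih =>
    rw [Pl_cons, Pl_cons, ih hf, iter_smul (Pl_contDiff w α t hf)]

end part2
end core

lemma pdm2_eq (α₁ α₂ : Fin d → ℕ) (f : X d → ℂ) :
    pdm2 α₁ α₂ f = Pl w1 α₁ (List.finRange d) (Pl w2 α₂ (List.finRange d) f) := rfl

end aux

section aux2
variable {d : ℕ} {f g : X d → ℂ} {α₁ α₂ : Fin d → ℕ}

lemma pdm2_contDiff (hf : ContDiff ℝ ∞ f) : ContDiff ℝ ∞ (pdm2 α₁ α₂ f) := by
  rw [pdm2_eq]; exact Pl_contDiff _ _ _ (Pl_contDiff _ _ _ hf)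

lemma pdm2_pdi1 (hf : ContDiff ℝ ∞ f) (j : Fin d) :
    pdm2 (α₁ + Pi.single j 1) α₂ f = pdm2 α₁ α₂ (pdi1 j f) := by
  rw [pdm2_eq, pdm2_eq, pdi1_eq,
    Pl_insert w1 α₁ (Pl_contDiff w2 α₂ _ hf) (List.nodup_finRange d) (List.mem_finRange j),
    Dop_Pl_comm w2 α₂ _ hf]

lemma pdm2_pdi2 (hf : ContDiff ℝ ∞ f) (i : Fin d) :
    pdm2 α₁ (α₂ + Pi.single i 1) f = pdm2 α₁ α₂ (pdi2 i f) := by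
  rw [pdm2_eq, pdm2_eq, pdi2_eq,
    Pl_insert w2 α₂ hf (List.nodup_finRange d) (List.mem_finRange i)]

lemma pdm2_add (hf : ContDiff ℝ ∞ f) (hg : ContDiff ℝ ∞ g) :
    pdm2 α₁ α₂ (fun x => f x + g x) = fun x => pdm2 α₁ α₂ f x + pdm2 α₁ α₂ g x := by
  rw [pdm2_eq, pdm2_eq, pdm2_eq, Pl_add w2 α₂ _ hf hg,
    Pl_add w1 α₁ _ (Pl_contDiff w2 α₂ _ hf) (Pl_contDiff w2 α₂ _ hg)]

lemma pdm2_smul (hf : ContDiff ℝ ∞ f) (c : ℝ) :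
    pdm2 α₁ α₂ (fun x => c • f x) = fun x => c • pdm2 α₁ α₂ f x := by
  rw [pdm2_eq, pdm2_eq, Pl_smul w2 α₂ _ hf c, Pl_smul w1 α₁ _ (Pl_contDiff w2 α₂ _ hf) c]

lemma iter_zero_fun (v : X d) (n : ℕ) :
    (Dop v)^[n] (fun _ : X d => (0:ℂ)) = fun _ => (0:ℂ) := by
  induction n with
  | zero => rfl
  | succ n ih => rw [Function.iterate_succ_apply, Dop_zero, ih]

lemma Pl_zero_fun (w : Fin d → X d) (α : Fin d → ℕ) (l : List (Fin d)) :
    Pl w α l (fun _ : X d => (0:ℂ)) = fun _ => (0:ℂ) := by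
  induction l with
  | nil => rfl
  | cons j t ih => rw [Pl_cons, ih, iter_zero_fun]

lemma pdm2_zero_fun : pdm2 α₁ α₂ (fun _ : X d => (0:ℂ)) = fun _ => (0:ℂ) := by
  rw [pdm2_eq, Pl_zero_fun, Pl_zero_fun]

lemma pdm2_sum {ι : Type*} [DecidableEq ι] (s : Finset ι) (g : ι → X d → ℂ)
    (hg : ∀ j ∈ s, ContDiff ℝ ∞ (g j)) :
    pdm2 α₁ α₂ (fun x => ∑ j ∈ s, g j x) = fun x => ∑ j ∈ s, pdm2 α₁ α₂ (g j) x := by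
  induction s using Finset.induction_on with
  | empty => simpa using pdm2_zero_fun
  | insert a s hnotmem ih =>
    have h1 : ContDiff ℝ ∞ (fun x => ∑ j ∈ s, g j x) :=
      ContDiff.sum fun j hj => hg j (Finset.mem_insert_of_mem hj)
    have h2 : (fun x => ∑ j ∈ insert a s, g j x)
        = fun x => g a x + ∑ j ∈ s, g j x := by
      funext x; rw [Finset.sum_insert hnotmem]
    rw [h2, pdm2_add (hg a (Finset.mem_insert_self a s)) h1,
      ih (fun j hj => hg j (Finset.mem_insert_of_mem hj))]
    funext x
    rw [Finset.sum_insert hnotmem]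

end aux2

section auxL
variable {d : ℕ} {f g : X d → ℂ}

def Aop (A : Matrix (Fin d) (Fin d) ℝ) : E d →L[ℝ] E d :=
  LinearMap.toContinuousLinearMap
    { toFun := fun v => (WithLp.toLp 2 (A.mulVec v) : E d)
      map_add' := fun x y => by simp [Matrix.mulVec_add]
      map_smul' := fun c x => by simp [Matrix.mulVec_smul] }

lemma Aop_apply (A : Matrix (Fin d) (Fin d) ℝ) (v : E d) :
    Aop A v = (A.mulVec v : Fin d → ℝ) := rfl

def Lm (A : Matrix (Fin d) (Fin d) ℝ) : X d →L[ℝ] X d :=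
  ((ContinuousLinearMap.fst ℝ (E d) (E d)) +
    (Aop A).comp (ContinuousLinearMap.snd ℝ (E d) (E d))).prod
    (ContinuousLinearMap.snd ℝ (E d) (E d))

variable {A : Matrix (Fin d) (Fin d) ℝ}

lemma Lm_apply (p : X d) : Lm A p = (p.1 + (Aop A) p.2, p.2) := rfl

lemma Lm_w1 (i : Fin d) : Lm A (w1 i) = w1 i := by
  show (EuclideanSpace.single i 1 + (Aop A) 0, (0 : E d)) = (EuclideanSpace.single i 1, 0)
  rw [map_zero, add_zero]

lemma Aop_single (i : Fin d) :
    Aop A (EuclideanSpace.single i 1) = ∑ j, A j i • EuclideanSpace.single j (1:ℝ) := by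
  ext k
  rw [Aop_apply]
  have h1 : A.mulVec (EuclideanSpace.single i 1) k = A k i := by
    simp [Matrix.mulVec, dotProduct, EuclideanSpace.single_apply, mul_ite, mul_one, mul_zero, Finset.sum_ite_eq, Finset.sum_ite_eq']
  have h2 : (∑ j, A j i • EuclideanSpace.single j (1:ℝ)) k
      = ∑ j, A j i * (EuclideanSpace.single j (1:ℝ)) k := by
    rw [WithLp.ofLp_sum, Finset.sum_apply]; rfl
  rw [h2]
  simp [EuclideanSpace.single_apply, mul_ite]

lemma Lm_w2 (i : Fin d) : Lm A (w2 i) = w2 i + ∑ j, A j i • w1 j := by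
  have hfst : (Lm A (w2 i)).1 = (w2 i + ∑ j, A j i • w1 j).1 := by
    show (0 : E d) + Aop A (EuclideanSpace.single i 1) = (0 : E d) + (∑ j, A j i • w1 j).1
    rw [Aop_single]
    congr 1
    rw [Prod.fst_sum]
    rfl
  have hsnd : (Lm A (w2 i)).2 = (w2 i + ∑ j, A j i • w1 j).2 := by
    show EuclideanSpace.single i 1 = EuclideanSpace.single i 1 + (∑ j, A j i • w1 j).2
    rw [Prod.snd_sum]
    have : ∑ j, (A j i • w1 j).2 = (0 : E d) := by
      apply Finset.sum_eq_zero
      intro j _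
      show A j i • (0 : E d) = 0
      rw [smul_zero]
    rw [this, add_zero]
  exact Prod.ext hfst hsnd

lemma fderiv_comp_L (hdf : Differentiable ℝ f) (p v : X d) :
    fderiv ℝ (fun q => f (Lm A q)) p v = fderiv ℝ f (Lm A p) (Lm A v) := by
  have h : fderiv ℝ (f ∘ (Lm A)) p = (fderiv ℝ f (Lm A p)).comp (Lm A : X d →L[ℝ] X d) := by
    rw [fderiv_comp p (hdf _) ((Lm A).differentiableAt), (Lm A).fderiv]
  show fderiv ℝ (f ∘ (Lm A)) p v = _
  rw [h]; rfl

lemma contDiff_comp_L (hf : ContDiff ℝ ∞ f) : ContDiff ℝ ∞ (fun q => f (Lm A q)) :=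
  hf.comp (Lm A).contDiff

lemma pdi1_comp (hf : ContDiff ℝ ∞ f) (i : Fin d) :
    pdi1 i (fun p => f (Lm A p)) = fun p => pdi1 i f (Lm A p) := by
  funext p
  show fderiv ℝ (fun q => f (Lm A q)) p (w1 i) = fderiv ℝ f (Lm A p) (w1 i)
  rw [fderiv_comp_L (hf.differentiable (by simp)), Lm_w1]

lemma pdi2_comp (hf : ContDiff ℝ ∞ f) (i : Fin d) :
    pdi2 i (fun p => f (Lm A p))
      = fun p => pdi2 i f (Lm A p) + ∑ j, A j i • pdi1 j f (Lm A p) := by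
  funext p
  show fderiv ℝ (fun q => f (Lm A q)) p (w2 i) = _
  rw [fderiv_comp_L (hf.differentiable (by simp)), Lm_w2, map_add, map_sum]
  have hs : ∀ j : Fin d, (fderiv ℝ f (Lm A p)) (A j i • w1 j) = A j i • pdi1 j f (Lm A p) :=
    fun j => by rw [_root_.map_smul]; rfl
  rw [Finset.sum_congr rfl (fun j _ => hs j)]
  rfl

lemma iter1_comp (hf : ContDiff ℝ ∞ f) (i : Fin d) (n : ℕ) :
    (Dop (w1 i))^[n] (fun p => f (Lm A p)) = fun p => (Dop (w1 i))^[n] f (Lm A p) := by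
  induction n generalizing f with
  | zero => rfl
  | succ n ih =>
    rw [Function.iterate_succ_apply, Function.iterate_succ_apply]
    have h : Dop (w1 i) (fun p => f (Lm A p)) = fun p => Dop (w1 i) f (Lm A p) :=
      pdi1_comp hf i
    rw [h, ih (Dop_contDiff hf (w1 i))]

lemma Pl1_comp (hf : ContDiff ℝ ∞ f) (α : Fin d → ℕ) (l : List (Fin d)) :
    Pl w1 α l (fun p => f (Lm A p)) = fun p => Pl w1 α l f (Lm A p) := by
  induction l generalizing f with
  | nil => rfl
  | cons j t ih =>
    rw [Pl_cons, Pl_cons, ih hf, iter1_comp (Pl_contDiff w1 α t hf)]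

lemma pdm2_comp_zero (hf : ContDiff ℝ ∞ f) (α₁ α₂ : Fin d → ℕ) (h0 : ∀ i, α₂ i = 0) :
    pdm2 α₁ α₂ (fun p => f (Lm A p)) = fun p => pdm2 α₁ α₂ f (Lm A p) := by
  have hz : ∀ (g : X d → ℂ), Pl w2 α₂ (List.finRange d) g = g := by
    intro g
    rw [Pl_congr w2 (List.finRange d) (fun j _ => h0 j), Pl_zero]
  rw [pdm2_eq, pdm2_eq, hz, hz, Pl1_comp hf]

end auxL

section nums
variable {d : ℕ}

lemma msize_add (α β : Fin d → ℕ) : msize (α + β) = msize α + msize β :=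
  Finset.sum_add_distrib

lemma msize_single (i : Fin d) : msize (Pi.single i 1 : Fin d → ℕ) = 1 := by
  unfold msize
  rw [Finset.sum_pi_single' i 1]
  simp

lemma exists_decomp {α : Fin d → ℕ} {n : ℕ} (h : msize α = n + 1) :
    ∃ (i : Fin d) (α' : Fin d → ℕ), α = α' + Pi.single i 1 ∧ msize α' = n := by
  have : ∃ i, α i ≠ 0 := by
    by_contra hc
    push_neg at hc
    have : msize α = 0 := Finset.sum_eq_zero (fun i _ => hc i)
    omega
  obtain ⟨i, hi⟩ := this
  have h2 : α = Function.update α i (α i - 1) + Pi.single i 1 := by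
    funext j
    rw [Pi.add_apply]
    rcases eq_or_ne j i with hj | hj
    · subst hj
      rw [Function.update_self, Pi.single_eq_same]
      omega
    · rw [Function.update_of_ne hj, Pi.single_eq_of_ne hj, add_zero]
  refine ⟨i, Function.update α i (α i - 1), h2, ?_⟩
  have := congrArg msize h2
  rw [msize_add, msize_single] at this
  omega

lemma choose_le_two_pow (n k : ℕ) : n.choose k ≤ 2 ^ n := by
  by_cases hk : k ≤ n
  · calc n.choose k ≤ ∑ i ∈ Finset.range (n+1), n.choose i :=
        Finset.single_le_sum (fun i _ => Nat.zero_le _) (Finset.mem_range.2 (by omega))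
      _ = 2 ^ n := Nat.sum_range_choose n
  · rw [Nat.choose_eq_zero_of_lt (by omega)]
    exact Nat.zero_le _

lemma fact_add_le (a b : ℕ) : (a + b).factorial ≤ 2 ^ (a + b) * (a.factorial * b.factorial) := by
  have h := Nat.add_choose_mul_factorial_mul_factorial a b
  calc (a+b).factorial = (a+b).choose b * a.factorial * b.factorial := h.symm
    _ ≤ 2 ^ (a+b) * a.factorial * b.factorial :=
        Nat.mul_le_mul_right _ (Nat.mul_le_mul_right _ (choose_le_two_pow (a+b) b))
    _ = 2 ^ (a+b) * (a.factorial * b.factorial) := by ring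

lemma mfact_add_le (α β : Fin d → ℕ) :
    mfact (α + β) ≤ 2 ^ (msize α + msize β) * (mfact α * mfact β) := by
  unfold mfact
  calc (∏ i, ((α + β) i).factorial)
      ≤ ∏ i, 2 ^ (α i + β i) * ((α i).factorial * (β i).factorial) :=
        Finset.prod_le_prod' (fun i _ => fact_add_le (α i) (β i))
    _ = (∏ i, 2 ^ (α i + β i)) * ∏ i, (α i).factorial * (β i).factorial :=
        Finset.prod_mul_distrib
    _ = 2 ^ (msize α + msize β) * (mfact α * mfact β) := by
        rw [Finset.prod_pow_eq_pow_sum, Finset.prod_mul_distrib]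
        unfold msize mfact
        rw [Finset.sum_add_distrib]

lemma mfact_le_fact_msize (α : Fin d → ℕ) : mfact α ≤ (msize α).factorial :=
  Nat.le_of_dvd (Nat.factorial_pos _) (Nat.prod_factorial_dvd_factorial_sum _ _)

lemma fact_mul_fact_le (a b : ℕ) : a.factorial * b.factorial ≤ (a + b).factorial :=
  Nat.le_of_dvd (Nat.factorial_pos _) (Nat.factorial_mul_factorial_dvd_factorial_add a b)

lemma one_le_mfact (α : Fin d → ℕ) : 1 ≤ mfact α :=
  Nat.one_le_iff_ne_zero.2 (Finset.prod_ne_zero_iff.2 fun i _ => (Nat.factorial_pos _).ne')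

lemma fact_msize_le (β : Fin d → ℕ) :
    (msize β).factorial ≤ 2 ^ (d * msize β) * mfact β := by
  have key : ∀ s : Finset (Fin d),
      (∑ i ∈ s, β i).factorial ≤ 2 ^ (s.card * ∑ i ∈ s, β i) * ∏ i ∈ s, (β i).factorial := by
    intro s
    induction s using Finset.induction_on with
    | empty => simp
    | insert a s hnot ih =>
      rw [Finset.sum_insert hnot, Finset.prod_insert hnot, Finset.card_insert_of_notMem hnot]
      calc (β a + ∑ i ∈ s, β i).factorial
          ≤ 2 ^ (β a + ∑ i ∈ s, β i) * ((β a).factorial * (∑ i ∈ s, β i).factorial) :=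
            fact_add_le _ _
        _ ≤ 2 ^ (β a + ∑ i ∈ s, β i) *
              ((β a).factorial * (2 ^ (s.card * ∑ i ∈ s, β i) * ∏ i ∈ s, (β i).factorial)) := by
            exact Nat.mul_le_mul_left _ (Nat.mul_le_mul_left _ ih)
        _ ≤ 2 ^ ((s.card + 1) * (β a + ∑ i ∈ s, β i)) * ((β a).factorial * ∏ i ∈ s, (β i).factorial) := by
            have hexp : (β a + ∑ i ∈ s, β i) + s.card * ∑ i ∈ s, β i
                ≤ (s.card + 1) * (β a + ∑ i ∈ s, β i) := by ring_nf; omega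
            calc 2 ^ (β a + ∑ i ∈ s, β i) *
                  ((β a).factorial * (2 ^ (s.card * ∑ i ∈ s, β i) * ∏ i ∈ s, (β i).factorial))
                = 2 ^ ((β a + ∑ i ∈ s, β i) + s.card * ∑ i ∈ s, β i) *
                  ((β a).factorial * ∏ i ∈ s, (β i).factorial) := by
                  rw [pow_add]; ring
              _ ≤ 2 ^ ((s.card + 1) * (β a + ∑ i ∈ s, β i)) *
                  ((β a).factorial * ∏ i ∈ s, (β i).factorial) :=
                  Nat.mul_le_mul_right _ (Nat.pow_le_pow_right (by omega) hexp)
  have h := key Finset.univ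
  simpa [msize, mfact, Finset.card_univ] using h

lemma two_pow_rpow (k : ℕ) (e : ℝ) : ((2:ℝ) ^ k) ^ e = ((2:ℝ) ^ e) ^ k := by
  rw [← Real.rpow_natCast (2:ℝ) k, ← Real.rpow_mul (by norm_num), mul_comm,
    Real.rpow_mul (by norm_num), Real.rpow_natCast]

end nums

section claims
variable {d : ℕ}

def Asum (A : Matrix (Fin d) (Fin d) ℝ) : ℝ := ∑ i, ∑ j, |A i j|

lemma Asum_nonneg (A : Matrix (Fin d) (Fin d) ℝ) : 0 ≤ Asum A :=
  Finset.sum_nonneg fun i _ => Finset.sum_nonneg fun j _ => abs_nonneg _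

lemma row_le_Asum (A : Matrix (Fin d) (Fin d) ℝ) (i0 : Fin d) :
    ∑ j, |A i0 j| ≤ Asum A :=
  Finset.single_le_sum (f := fun i => ∑ j, |A i j|)
    (fun i _ => Finset.sum_nonneg fun j _ => abs_nonneg _) (Finset.mem_univ i0)

lemma col_le_Asum (A : Matrix (Fin d) (Fin d) ℝ) (i0 : Fin d) :
    ∑ j, |A j i0| ≤ Asum A := by
  unfold Asum
  apply Finset.sum_le_sum
  intro j _
  exact Finset.single_le_sum (f := fun k => |A j k|) (fun k _ => abs_nonneg _) (Finset.mem_univ i0)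

lemma prod_pow_single_add (x : Fin d → ℝ) (β : Fin d → ℕ) (i0 : Fin d) :
    ∏ i, x i ^ ((β + Pi.single i0 1 : Fin d → ℕ) i) = (∏ i, x i ^ β i) * x i0 := by
  have h : ∀ i, x i ^ ((β + Pi.single i0 1 : Fin d → ℕ) i) = x i ^ β i * x i ^ (Pi.single i0 1 : Fin d → ℕ) i := by
    intro i
    rw [Pi.add_apply, pow_add]
  rw [Finset.prod_congr rfl (fun i _ => h i), Finset.prod_mul_distrib]
  congr 1
  rw [Finset.prod_eq_single i0 (fun b _ hb => by rw [Pi.single_eq_of_ne hb, pow_zero])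
    (fun h => absurd (Finset.mem_univ i0) h)]
  rw [Pi.single_eq_same, pow_one]

lemma msize_zero_fun : msize (fun _ : Fin d => 0) = 0 := Finset.sum_eq_zero fun _ _ => rfl

lemma WClaim (A : Matrix (Fin d) (Fin d) ℝ) (t r : Fin d → ℝ)
    (ht : ∀ i, 0 ≤ t i) (hr : ∀ j, 0 ≤ r j) :
    ∀ (m : ℕ) (β : Fin d → ℕ), msize β = m → ∀ (Z c : ℝ), 0 ≤ Z → ∀ u : ℕ → ℝ,
    (∀ ρ σ : Fin d → ℕ,
      (∏ i, t i ^ ρ i) * (∏ j, r j ^ σ j) * Z ≤ c * u (msize ρ + msize σ)) →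
    (∏ i, (t i + ∑ j, |A i j| * r j) ^ β i) * Z ≤ c * (1 + Asum A) ^ m * u m := by
  intro m
  induction m with
  | zero =>
    intro β hβ Z c hZ u hyp
    have h0 : ∀ i, β i = 0 := fun i =>
      (Finset.sum_eq_zero_iff).mp hβ i (Finset.mem_univ i)
    have h1 : (∏ i, (t i + ∑ j, |A i j| * r j) ^ β i) = 1 :=
      Finset.prod_eq_one fun i _ => by rw [h0 i, pow_zero]
    have h2 := hyp (fun _ => 0) (fun _ => 0)
    simp only [pow_zero, Finset.prod_const_one, one_mul, msize_zero_fun] at h2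
    rw [h1, one_mul, pow_zero, mul_one]
    exact h2
  | succ n ih =>
    intro β hβ Z c hZ u hyp
    obtain ⟨i0, β', hdec, hsz⟩ := exists_decomp hβ
    have hs : ∀ i, 0 ≤ ∑ j, |A i j| * r j :=
      fun i => Finset.sum_nonneg fun j _ => mul_nonneg (abs_nonneg _) (hr j)
    have hZ' : 0 ≤ (t i0 + ∑ j, |A i0 j| * r j) * Z :=
      mul_nonneg (add_nonneg (ht i0) (hs i0)) hZ
    have hyp' : ∀ ρ σ : Fin d → ℕ,
        (∏ i, t i ^ ρ i) * (∏ j, r j ^ σ j) * ((t i0 + ∑ j, |A i0 j| * r j) * Z)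
          ≤ (c * (1 + Asum A)) * u (msize ρ + msize σ + 1) := by
      intro ρ σ
      have hPρ : 0 ≤ ∏ i, t i ^ ρ i := Finset.prod_nonneg fun i _ => pow_nonneg (ht i) _
      have hPσ : 0 ≤ ∏ j, r j ^ σ j := Finset.prod_nonneg fun j _ => pow_nonneg (hr j) _
      have expand : (∏ i, t i ^ ρ i) * (∏ j, r j ^ σ j) * ((t i0 + ∑ j, |A i0 j| * r j) * Z)
          = (∏ i, t i ^ ((ρ + Pi.single i0 1 : Fin d → ℕ) i)) * (∏ j, r j ^ σ j) * Z
            + ∑ j, ((∏ i, t i ^ ρ i) * (∏ k, r k ^ ((σ + Pi.single j 1 : Fin d → ℕ) k)) * Z) * |A i0 j| := by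
        rw [prod_pow_single_add t ρ i0]
        have h2 : ∀ j : Fin d,
            ((∏ i, t i ^ ρ i) * (∏ k, r k ^ ((σ + Pi.single j 1 : Fin d → ℕ) k)) * Z) * |A i0 j|
              = ((∏ i, t i ^ ρ i) * (∏ k, r k ^ σ k) * Z) * (|A i0 j| * r j) := by
          intro j
          rw [prod_pow_single_add r σ j]
          ring
        rw [Finset.sum_congr rfl (fun j _ => h2 j), ← Finset.mul_sum]
        ring
      have hfirst : (∏ i, t i ^ ((ρ + Pi.single i0 1 : Fin d → ℕ) i)) * (∏ j, r j ^ σ j) * Z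
          ≤ c * u (msize ρ + msize σ + 1) := by
        have := hyp (ρ + Pi.single i0 1) σ
        rwa [msize_add, msize_single, add_right_comm (msize ρ) 1 (msize σ)] at this
      have hcu : 0 ≤ c * u (msize ρ + msize σ + 1) := by
        refine le_trans ?_ hfirst
        exact mul_nonneg (mul_nonneg (Finset.prod_nonneg fun i _ => pow_nonneg (ht i) _) hPσ) hZ
      have hsum : ∑ j, ((∏ i, t i ^ ρ i) * (∏ k, r k ^ ((σ + Pi.single j 1 : Fin d → ℕ) k)) * Z) * |A i0 j|
          ≤ Asum A * (c * u (msize ρ + msize σ + 1)) := by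
        have hterm : ∀ j : Fin d,
            ((∏ i, t i ^ ρ i) * (∏ k, r k ^ ((σ + Pi.single j 1 : Fin d → ℕ) k)) * Z) * |A i0 j|
              ≤ (c * u (msize ρ + msize σ + 1)) * |A i0 j| := by
          intro j
          apply mul_le_mul_of_nonneg_right _ (abs_nonneg _)
          have := hyp ρ (σ + Pi.single j 1)
          rwa [msize_add, msize_single, ← add_assoc] at this
        calc ∑ j, ((∏ i, t i ^ ρ i) * (∏ k, r k ^ ((σ + Pi.single j 1 : Fin d → ℕ) k)) * Z) * |A i0 j|
            ≤ ∑ j, (c * u (msize ρ + msize σ + 1)) * |A i0 j| :=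
              Finset.sum_le_sum fun j _ => hterm j
          _ = (c * u (msize ρ + msize σ + 1)) * ∑ j, |A i0 j| := by rw [← Finset.mul_sum]
          _ ≤ (c * u (msize ρ + msize σ + 1)) * Asum A :=
              mul_le_mul_of_nonneg_left (row_le_Asum A i0) hcu
          _ = Asum A * (c * u (msize ρ + msize σ + 1)) := by ring
      calc (∏ i, t i ^ ρ i) * (∏ j, r j ^ σ j) * ((t i0 + ∑ j, |A i0 j| * r j) * Z)
          = (∏ i, t i ^ ((ρ + Pi.single i0 1 : Fin d → ℕ) i)) * (∏ j, r j ^ σ j) * Z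
            + ∑ j, ((∏ i, t i ^ ρ i) * (∏ k, r k ^ ((σ + Pi.single j 1 : Fin d → ℕ) k)) * Z) * |A i0 j| := expand
        _ ≤ c * u (msize ρ + msize σ + 1) + Asum A * (c * u (msize ρ + msize σ + 1)) :=
            add_le_add hfirst hsum
        _ = (c * (1 + Asum A)) * u (msize ρ + msize σ + 1) := by ring
    have IH := ih β' hsz ((t i0 + ∑ j, |A i0 j| * r j) * Z) (c * (1 + Asum A)) hZ'
      (fun k => u (k + 1)) hyp'
    have lhs_eq : (∏ i, (t i + ∑ j, |A i j| * r j) ^ β i) * Z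
        = (∏ i, (t i + ∑ j, |A i j| * r j) ^ β' i) * ((t i0 + ∑ j, |A i0 j| * r j) * Z) := by
      rw [hdec, prod_pow_single_add (fun i => t i + ∑ j, |A i j| * r j) β' i0]
      ring
    rw [lhs_eq]
    refine le_trans IH (le_of_eq ?_)
    rw [pow_succ]
    ring

end claims

section dclaim
variable {d : ℕ}

lemma DClaim (A : Matrix (Fin d) (Fin d) ℝ) (V : ℝ) (hV : 0 ≤ V) (x : X d) (α₁ : Fin d → ℕ) :
    ∀ (n : ℕ) (f : X d → ℂ), ContDiff ℝ ∞ f → ∀ (α₂ : Fin d → ℕ), msize α₂ = n →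
    ∀ (c : ℝ) (u : ℕ → ℝ),
    (∀ γ δ : Fin d → ℕ, V * ‖pdm2 (α₁ + γ) δ f (Lm A x)‖ ≤ c * u (msize γ + msize δ)) →
    V * ‖pdm2 α₁ α₂ (fun p => f (Lm A p)) x‖ ≤ c * (1 + Asum A) ^ n * u n := by
  intro n
  induction n with
  | zero =>
    intro f hf α₂ hα₂ c u hyp
    have h0 : ∀ i, α₂ i = 0 := fun i =>
      (Finset.sum_eq_zero_iff).mp hα₂ i (Finset.mem_univ i)
    rw [pdm2_comp_zero hf α₁ α₂ h0]
    have h2 := hyp (fun _ => 0) α₂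
    have e1 : α₁ + (fun _ : Fin d => 0) = α₁ := by funext i; simp
    have e2 : msize (fun _ : Fin d => 0) + msize α₂ = 0 := by rw [msize_zero_fun, hα₂]
    rw [e1, e2] at h2
    rw [pow_zero, mul_one]
    exact h2
  | succ n ih =>
    intro f hf α₂ hα₂ c u hyp
    obtain ⟨i, α₂', hdec, hsz⟩ := exists_decomp hα₂
    have hsum_cd : ContDiff ℝ ∞ (fun y => ∑ j, A j i • pdi1 j f y) :=
      ContDiff.sum fun j _ => (Dop_contDiff hf (w1 j)).const_smul (A j i)
    have hH : ContDiff ℝ ∞ (fun y => pdi2 i f y + ∑ j, A j i • pdi1 j f y) :=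
      (Dop_contDiff hf (w2 i)).add hsum_cd
    have key : pdm2 α₁ α₂ (fun p => f (Lm A p))
        = pdm2 α₁ α₂' (fun p => (fun y => pdi2 i f y + ∑ j, A j i • pdi1 j f y) (Lm A p)) := by
      rw [hdec, pdm2_pdi2 (contDiff_comp_L hf) i, pdi2_comp hf i]
    rw [key]
    have hyp' : ∀ γ δ : Fin d → ℕ,
        V * ‖pdm2 (α₁ + γ) δ (fun y => pdi2 i f y + ∑ j, A j i • pdi1 j f y) (Lm A x)‖
          ≤ (c * (1 + Asum A)) * u (msize γ + msize δ + 1) := by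
      intro γ δ
      have e1 : pdm2 (α₁ + γ) δ (fun y => pdi2 i f y + ∑ j, A j i • pdi1 j f y)
          = fun y => pdm2 (α₁ + γ) δ (pdi2 i f) y
              + pdm2 (α₁ + γ) δ (fun z => ∑ j, A j i • pdi1 j f z) y :=
        pdm2_add (Dop_contDiff hf (w2 i)) hsum_cd
      have e2 : pdm2 (α₁ + γ) δ (fun z => ∑ j, A j i • pdi1 j f z)
          = fun y => ∑ j, pdm2 (α₁ + γ) δ (fun z => A j i • pdi1 j f z) y :=
        pdm2_sum Finset.univ (fun j => fun z => A j i • pdi1 j f z)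
          (fun j _ => (Dop_contDiff hf (w1 j)).const_smul (A j i))
      have e3 : ∀ j, pdm2 (α₁ + γ) δ (fun z => A j i • pdi1 j f z)
          = fun y => A j i • pdm2 (α₁ + γ) δ (pdi1 j f) y :=
        fun j => pdm2_smul (Dop_contDiff hf (w1 j)) (A j i)
      have e4 : pdm2 (α₁ + γ) δ (pdi2 i f) = pdm2 (α₁ + γ) (δ + Pi.single i 1) f :=
        (pdm2_pdi2 hf i).symm
      have e5 : ∀ j, pdm2 (α₁ + γ) δ (pdi1 j f) = pdm2 (α₁ + (γ + Pi.single j 1)) δ f := by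
        intro j
        rw [← pdm2_pdi1 hf j, add_assoc]
      have hval : pdm2 (α₁ + γ) δ (fun y => pdi2 i f y + ∑ j, A j i • pdi1 j f y) (Lm A x)
          = pdm2 (α₁ + γ) (δ + Pi.single i 1) f (Lm A x)
            + ∑ j, A j i • pdm2 (α₁ + (γ + Pi.single j 1)) δ f (Lm A x) := by
        rw [e1]
        simp only []
        rw [e2]
        simp only []
        rw [e4]
        congr 1
        apply Finset.sum_congr rfl
        intro j _
        rw [e3 j]
        simp only []
        rw [e5 j]
      have hfirst : V * ‖pdm2 (α₁ + γ) (δ + Pi.single i 1) f (Lm A x)‖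
          ≤ c * u (msize γ + msize δ + 1) := by
        have := hyp γ (δ + Pi.single i 1)
        rwa [msize_add, msize_single, ← add_assoc] at this
      have hcu : 0 ≤ c * u (msize γ + msize δ + 1) :=
        le_trans (mul_nonneg hV (norm_nonneg _)) hfirst
      have hrest : ∀ j : Fin d, V * ‖pdm2 (α₁ + (γ + Pi.single j 1)) δ f (Lm A x)‖
          ≤ c * u (msize γ + msize δ + 1) := by
        intro j
        have := hyp (γ + Pi.single j 1) δ
        rwa [msize_add, msize_single, add_right_comm (msize γ) 1 (msize δ)] at this
      calc V * ‖pdm2 (α₁ + γ) δ (fun y => pdi2 i f y + ∑ j, A j i • pdi1 j f y) (Lm A x)‖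
          = V * ‖pdm2 (α₁ + γ) (δ + Pi.single i 1) f (Lm A x)
              + ∑ j, A j i • pdm2 (α₁ + (γ + Pi.single j 1)) δ f (Lm A x)‖ := by rw [hval]
        _ ≤ V * (‖pdm2 (α₁ + γ) (δ + Pi.single i 1) f (Lm A x)‖
              + ∑ j, |A j i| * ‖pdm2 (α₁ + (γ + Pi.single j 1)) δ f (Lm A x)‖) := by
            apply mul_le_mul_of_nonneg_left _ hV
            refine le_trans (norm_add_le _ _) (add_le_add_right ?_ _)
            refine le_trans (norm_sum_le _ _) (le_of_eq ?_)
            apply Finset.sum_congr rfl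
            intro j _
            rw [norm_smul]
            rfl
        _ = V * ‖pdm2 (α₁ + γ) (δ + Pi.single i 1) f (Lm A x)‖
              + ∑ j, |A j i| * (V * ‖pdm2 (α₁ + (γ + Pi.single j 1)) δ f (Lm A x)‖) := by
            rw [mul_add, Finset.mul_sum]
            congr 1
            apply Finset.sum_congr rfl
            intro j _
            ring
        _ ≤ c * u (msize γ + msize δ + 1)
              + ∑ j, |A j i| * (c * u (msize γ + msize δ + 1)) := by
            refine add_le_add hfirst (Finset.sum_le_sum fun j _ => ?_)
            exact mul_le_mul_of_nonneg_left (hrest j) (abs_nonneg _)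
        _ ≤ c * u (msize γ + msize δ + 1)
              + Asum A * (c * u (msize γ + msize δ + 1)) := by
            refine add_le_add_right ?_ _
            rw [← Finset.sum_mul]
            exact mul_le_mul_of_nonneg_right (col_le_Asum A i) hcu
        _ = (c * (1 + Asum A)) * u (msize γ + msize δ + 1) := by ring
    have IH := ih (fun y => pdi2 i f y + ∑ j, A j i • pdi1 j f y) hH α₂' hsz
      (c * (1 + Asum A)) (fun k => u (k + 1)) hyp'
    refine le_trans IH (le_of_eq ?_)
    rw [pow_succ]
    ring

end dclaim

section rpows
variable {d : ℕ}

lemma one_le_B {e : ℝ} (he : 0 ≤ e) : 1 ≤ (2:ℝ) ^ e := by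
  rw [show (1:ℝ) = (2:ℝ) ^ (0:ℝ) from (Real.rpow_zero 2).symm]
  exact Real.rpow_le_rpow_of_exponent_le (by norm_num) he

lemma B_pos (e : ℝ) : 0 < (2:ℝ) ^ e := Real.rpow_pos_of_pos (by norm_num) e

lemma one_le_mfact_cast (α : Fin d → ℕ) : (1:ℝ) ≤ (mfact α : ℝ) := by
  exact_mod_cast one_le_mfact α

lemma mfact_rpow_nonneg (α : Fin d → ℕ) (e : ℝ) : 0 ≤ (mfact α : ℝ) ^ e :=
  Real.rpow_nonneg (Nat.cast_nonneg _) e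

lemma mfact_mul_mfact_le (γ δ : Fin d → ℕ) :
    mfact γ * mfact δ ≤ (msize γ + msize δ).factorial :=
  le_trans (Nat.mul_le_mul (mfact_le_fact_msize γ) (mfact_le_fact_msize δ))
    (fact_mul_fact_le _ _)

/-- the main per-pair factorial estimate -/
lemma pairbound (s₁ s₂ : ℝ) (hs₁ : 0 < s₁) (hs : s₁ ≤ s₂) (α₁ γ δ : Fin d → ℕ) :
    (mfact (α₁ + γ) : ℝ) ^ s₁ * (mfact δ : ℝ) ^ s₂
      ≤ ((2:ℝ) ^ s₁) ^ (msize α₁) * (mfact α₁ : ℝ) ^ s₁ *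
        (((2:ℝ) ^ s₁) ^ (msize γ + msize δ) *
          (((msize γ + msize δ).factorial : ℝ)) ^ s₂) := by
  have hs₂ : (0:ℝ) ≤ s₂ := le_trans hs₁.le hs
  have step1 : (mfact (α₁ + γ) : ℝ) ^ s₁
      ≤ ((2:ℝ) ^ s₁) ^ (msize α₁ + msize γ) * ((mfact α₁ : ℝ) ^ s₁ * (mfact γ : ℝ) ^ s₁) := by
    have h1 : (mfact (α₁ + γ) : ℝ) ^ s₁
        ≤ ((2 ^ (msize α₁ + msize γ) * (mfact α₁ * mfact γ) : ℕ) : ℝ) ^ s₁ :=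
      Real.rpow_le_rpow (Nat.cast_nonneg _) (Nat.cast_le.2 (mfact_add_le α₁ γ)) hs₁.le
    refine le_trans h1 (le_of_eq ?_)
    push_cast
    rw [Real.mul_rpow (by positivity) (by positivity),
      Real.mul_rpow (Nat.cast_nonneg _) (Nat.cast_nonneg _), two_pow_rpow]
  have step2 : (mfact γ : ℝ) ^ s₁ ≤ (mfact γ : ℝ) ^ s₂ :=
    Real.rpow_le_rpow_of_exponent_le (one_le_mfact_cast γ) hs
  have step3 : (mfact γ : ℝ) ^ s₂ * (mfact δ : ℝ) ^ s₂
      ≤ (((msize γ + msize δ).factorial : ℝ)) ^ s₂ := by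
    rw [← Real.mul_rpow (Nat.cast_nonneg _) (Nat.cast_nonneg _)]
    refine Real.rpow_le_rpow (by positivity) ?_ hs₂
    exact_mod_cast mfact_mul_mfact_le γ δ
  have step4 : ((2:ℝ) ^ s₁) ^ (msize α₁ + msize γ)
      ≤ ((2:ℝ) ^ s₁) ^ (msize α₁) * ((2:ℝ) ^ s₁) ^ (msize γ + msize δ) := by
    rw [← pow_add]
    exact pow_le_pow_right₀ (one_le_B hs₁.le) (by omega)
  calc (mfact (α₁ + γ) : ℝ) ^ s₁ * (mfact δ : ℝ) ^ s₂
      ≤ (((2:ℝ) ^ s₁) ^ (msize α₁ + msize γ) * ((mfact α₁ : ℝ) ^ s₁ * (mfact γ : ℝ) ^ s₁))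
          * (mfact δ : ℝ) ^ s₂ :=
        mul_le_mul_of_nonneg_right step1 (mfact_rpow_nonneg δ s₂)
    _ ≤ (((2:ℝ) ^ s₁) ^ (msize α₁) * ((2:ℝ) ^ s₁) ^ (msize γ + msize δ)
          * ((mfact α₁ : ℝ) ^ s₁ * (mfact γ : ℝ) ^ s₁)) * (mfact δ : ℝ) ^ s₂ := by
        refine mul_le_mul_of_nonneg_right (mul_le_mul_of_nonneg_right step4 ?_) (mfact_rpow_nonneg δ s₂)
        exact mul_nonneg (mfact_rpow_nonneg α₁ s₁) (mfact_rpow_nonneg γ s₁)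
    _ = ((2:ℝ) ^ s₁) ^ (msize α₁) * (mfact α₁ : ℝ) ^ s₁ * ((2:ℝ) ^ s₁) ^ (msize γ + msize δ)
          * ((mfact γ : ℝ) ^ s₁ * (mfact δ : ℝ) ^ s₂) := by ring
    _ ≤ ((2:ℝ) ^ s₁) ^ (msize α₁) * (mfact α₁ : ℝ) ^ s₁ * ((2:ℝ) ^ s₁) ^ (msize γ + msize δ)
          * ((mfact γ : ℝ) ^ s₂ * (mfact δ : ℝ) ^ s₂) := by
        refine mul_le_mul_of_nonneg_left
          (mul_le_mul_of_nonneg_right step2 (mfact_rpow_nonneg δ s₂)) ?_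
        have := B_pos s₁
        positivity
    _ ≤ ((2:ℝ) ^ s₁) ^ (msize α₁) * (mfact α₁ : ℝ) ^ s₁ * ((2:ℝ) ^ s₁) ^ (msize γ + msize δ)
          * (((msize γ + msize δ).factorial : ℝ)) ^ s₂ := by
        refine mul_le_mul_of_nonneg_left step3 ?_
        have := B_pos s₁
        positivity
    _ = ((2:ℝ) ^ s₁) ^ (msize α₁) * (mfact α₁ : ℝ) ^ s₁ *
        (((2:ℝ) ^ s₁) ^ (msize γ + msize δ) * (((msize γ + msize δ).factorial : ℝ)) ^ s₂) := by
        ring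

end rpows

section finalaux
variable {d : ℕ}

lemma prod_pow_add (x : Fin d → ℝ) (σ β : Fin d → ℕ) :
    ∏ i, x i ^ ((σ + β : Fin d → ℕ) i) = (∏ i, x i ^ σ i) * (∏ i, x i ^ β i) := by
  rw [← Finset.prod_mul_distrib]
  exact Finset.prod_congr rfl fun i _ => by rw [Pi.add_apply, pow_add]

lemma one_le_mul' {x y : ℝ} (hx : 1 ≤ x) (hy : 1 ≤ y) : 1 ≤ x * y := by nlinarith

lemma fact_rpow_le (β : Fin d → ℕ) (e : ℝ) (he : 0 ≤ e) :
    (((msize β).factorial : ℝ)) ^ e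
      ≤ (((2:ℝ) ^ e) ^ d) ^ (msize β) * (mfact β : ℝ) ^ e := by
  have h1 : (((msize β).factorial : ℝ)) ^ e
      ≤ ((2 ^ (d * msize β) * mfact β : ℕ) : ℝ) ^ e :=
    Real.rpow_le_rpow (Nat.cast_nonneg _) (Nat.cast_le.2 (fact_msize_le β)) he
  refine le_trans h1 (le_of_eq ?_)
  push_cast
  rw [Real.mul_rpow (by positivity) (Nat.cast_nonneg _), two_pow_rpow, ← pow_mul,
    mul_comm d (msize β), pow_mul]

end finalaux

set_option maxHeartbeats 1000000

/-- invariance of `𝒮^{s₁,s₂}_{t₁,t₂}` under the shear `(x,y) ↦ (x+Ay, y)`. -/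
theorem stmt11 (d : ℕ) (hd : 0 < d) (s₁ s₂ t₁ t₂ : ℝ)
    (hs₁ : 0 < s₁) (hs₂ : 0 < s₂) (ht₁ : 0 < t₁) (ht₂ : 0 < t₂)
    (h1 : 1 ≤ s₁ + t₁) (h2 : 1 ≤ s₂ + t₂) (hs : s₁ ≤ s₂) (ht : t₂ ≤ t₁)
    (A : Matrix (Fin d) (Fin d) ℝ) (F : E d × E d → ℂ)
    (hF : GelfandShilov2 d s₁ s₂ t₁ t₂ F) :
    GelfandShilov2 d s₁ s₂ t₁ t₂
      (fun p : E d × E d => F (p.1 + (show E d from WithLp.toLp 2 (A.mulVec p.2)), p.2)) := by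
  obtain ⟨hFsm, C, hC, h, hh, hb⟩ := hF
  have hFsm' : ContDiff ℝ ∞ F := hFsm.of_le (by simp)
  have hGeq : (fun p : E d × E d => F (p.1 + (show E d from WithLp.toLp 2 (A.mulVec p.2)), p.2))
      = fun p => F (Lm A p) := rfl
  have ha0 : 0 ≤ Asum A := Asum_nonneg A
  have hone : (1:ℝ) ≤ 1 + Asum A := by linarith
  have hBs₁ : (1:ℝ) ≤ (2:ℝ) ^ s₁ := one_le_B hs₁.le
  have hBs₂ : (1:ℝ) ≤ (2:ℝ) ^ s₂ := one_le_B hs₂.le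
  have hBt₁ : (1:ℝ) ≤ (2:ℝ) ^ t₁ := one_le_B ht₁.le
  have hBt₂ : (1:ℝ) ≤ (2:ℝ) ^ t₂ := one_le_B ht₂.le
  have hBs₂d : (1:ℝ) ≤ ((2:ℝ) ^ s₂) ^ d := by
    calc (1:ℝ) = 1 ^ d := (one_pow d).symm
      _ ≤ ((2:ℝ) ^ s₂) ^ d := pow_le_pow_left₀ zero_le_one hBs₂ d
  have hBt₁d : (1:ℝ) ≤ ((2:ℝ) ^ t₁) ^ d := by
    calc (1:ℝ) = 1 ^ d := (one_pow d).symm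
      _ ≤ ((2:ℝ) ^ t₁) ^ d := pow_le_pow_left₀ zero_le_one hBt₁ d
  set H : ℝ := h * (1 + Asum A) * ((2:ℝ) ^ s₁) * ((2:ℝ) ^ s₂) * ((2:ℝ) ^ t₁) * ((2:ℝ) ^ t₂)
      * (((2:ℝ) ^ s₂) ^ d) * (((2:ℝ) ^ t₁) ^ d) with hHdef
  have hHpos : 0 < H := by
    have b1 := B_pos s₁; have b2 := B_pos s₂; have b3 := B_pos t₁; have b4 := B_pos t₂
    positivity
  constructor
  · rw [hGeq]
    exact hFsm.comp (Lm A).contDiff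
  refine ⟨C, hC, H, hHpos, ?_⟩
  intro α₁ α₂ β₁ β₂ x
  rw [hGeq]
  set V : ℝ := (∏ i, |x.1 i| ^ β₁ i) * (∏ i, |x.2 i| ^ β₂ i) with hVdef
  have hV : 0 ≤ V := by positivity
  set C0 : ℝ := C * h ^ (msize α₁ + msize β₂) * ((2:ℝ) ^ s₁) ^ (msize α₁)
      * (mfact α₁ : ℝ) ^ s₁ * ((2:ℝ) ^ t₂) ^ (msize β₂) * (mfact β₂ : ℝ) ^ t₂ with hC0def
  set uD : ℕ → ℝ := fun k => (h * (2:ℝ) ^ s₁) ^ k * ((k.factorial : ℝ)) ^ s₂ with huDdef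
  set cD : ℝ := C0 * ((1 + Asum A) ^ (msize β₁) * (h * (2:ℝ) ^ t₂) ^ (msize β₁)
      * (((msize β₁).factorial : ℝ)) ^ t₁) with hcDdef
  set t : Fin d → ℝ := fun i => |(Lm A x).1 i| with htdef
  set r : Fin d → ℝ := fun j => |x.2 j| with hrdef
  have htn : ∀ i, 0 ≤ t i := fun i => abs_nonneg _
  have hrn : ∀ j, 0 ≤ r j := fun j => abs_nonneg _
  have HypD : ∀ γ δ : Fin d → ℕ,
      V * ‖pdm2 (α₁ + γ) δ F (Lm A x)‖ ≤ cD * uD (msize γ + msize δ) := by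
    intro γ δ
    set Z : ℝ := (∏ j, r j ^ β₂ j) * ‖pdm2 (α₁ + γ) δ F (Lm A x)‖ with hZdef
    have hZ : 0 ≤ Z := by positivity
    set k : ℕ := msize γ + msize δ with hkdef
    set cW : ℝ := C0 * ((h * (2:ℝ) ^ s₁) ^ k * ((k.factorial : ℝ)) ^ s₂) with hcWdef
    set uW : ℕ → ℝ := fun l => (h * (2:ℝ) ^ t₂) ^ l * ((l.factorial : ℝ)) ^ t₁ with huWdef
    have hypW : ∀ ρ σ : Fin d → ℕ,
        (∏ i, t i ^ ρ i) * (∏ j, r j ^ σ j) * Z ≤ cW * uW (msize ρ + msize σ) := by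
      intro ρ σ
      have hbi := hb (α₁ + γ) δ ρ (σ + β₂) (Lm A x)
      have elhs : (∏ i, |(Lm A x).1 i| ^ ρ i)
          * (∏ i, |(Lm A x).2 i| ^ ((σ + β₂ : Fin d → ℕ) i))
          * ‖pdm2 (α₁ + γ) δ F (Lm A x)‖
          = (∏ i, t i ^ ρ i) * (∏ j, r j ^ σ j) * Z := by
        have e2 : (∏ i, |(Lm A x).2 i| ^ ((σ + β₂ : Fin d → ℕ) i))
            = (∏ j, r j ^ σ j) * (∏ j, r j ^ β₂ j) := by
          have e3 : ∀ i, |(Lm A x).2 i| = r i := fun i => rfl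
          rw [Finset.prod_congr rfl (fun i _ => by rw [e3 i, hrdef])]
          exact prod_pow_add r σ β₂
        rw [e2, hZdef]
        ring
      rw [elhs] at hbi
      refine le_trans hbi ?_
      set l : ℕ := msize ρ + msize σ with hldef
      have hexp : msize (α₁ + γ) + msize δ + msize ρ + msize (σ + β₂)
          = (msize α₁ + msize β₂) + k + l := by
        rw [msize_add, msize_add]
        omega
      have pb1 := pairbound s₁ s₂ hs₁ hs α₁ γ δ
      have pb2 : (mfact (σ + β₂) : ℝ) ^ t₂ * (mfact ρ : ℝ) ^ t₁
          ≤ ((2:ℝ) ^ t₂) ^ (msize β₂) * (mfact β₂ : ℝ) ^ t₂ *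
            (((2:ℝ) ^ t₂) ^ l * ((l.factorial : ℝ)) ^ t₁) := by
        have hpb := pairbound t₂ t₁ ht₂ ht β₂ σ ρ
        rw [add_comm σ β₂]
        have hl' : msize σ + msize ρ = l := by omega
        rwa [hl'] at hpb
      have step : C * h ^ (msize (α₁ + γ) + msize δ + msize ρ + msize (σ + β₂))
            * (mfact (α₁ + γ) : ℝ) ^ s₁ * (mfact δ : ℝ) ^ s₂ * (mfact ρ : ℝ) ^ t₁
            * (mfact (σ + β₂) : ℝ) ^ t₂
          = (C * h ^ (msize α₁ + msize β₂) * h ^ k * h ^ l)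
            * ((mfact (α₁ + γ) : ℝ) ^ s₁ * (mfact δ : ℝ) ^ s₂)
            * ((mfact (σ + β₂) : ℝ) ^ t₂ * (mfact ρ : ℝ) ^ t₁) := by
        rw [hexp, pow_add, pow_add]
        ring
      rw [step]
      have hnn : 0 ≤ C * h ^ (msize α₁ + msize β₂) * h ^ k * h ^ l := by positivity
      calc (C * h ^ (msize α₁ + msize β₂) * h ^ k * h ^ l)
            * ((mfact (α₁ + γ) : ℝ) ^ s₁ * (mfact δ : ℝ) ^ s₂)
            * ((mfact (σ + β₂) : ℝ) ^ t₂ * (mfact ρ : ℝ) ^ t₁)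
          ≤ (C * h ^ (msize α₁ + msize β₂) * h ^ k * h ^ l)
            * (((2:ℝ) ^ s₁) ^ (msize α₁) * (mfact α₁ : ℝ) ^ s₁ *
              (((2:ℝ) ^ s₁) ^ k * ((k.factorial : ℝ)) ^ s₂))
            * (((2:ℝ) ^ t₂) ^ (msize β₂) * (mfact β₂ : ℝ) ^ t₂ *
              (((2:ℝ) ^ t₂) ^ l * ((l.factorial : ℝ)) ^ t₁)) := by
            have hnn2 : 0 ≤ (mfact (σ + β₂) : ℝ) ^ t₂ * (mfact ρ : ℝ) ^ t₁ :=
              mul_nonneg (mfact_rpow_nonneg _ _) (mfact_rpow_nonneg _ _)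
            have hnn3 : 0 ≤ (C * h ^ (msize α₁ + msize β₂) * h ^ k * h ^ l)
                * (((2:ℝ) ^ s₁) ^ (msize α₁) * (mfact α₁ : ℝ) ^ s₁ *
                  (((2:ℝ) ^ s₁) ^ k * ((k.factorial : ℝ)) ^ s₂)) := by
              have b1 := B_pos s₁
              have h1 := mfact_rpow_nonneg α₁ s₁
              have h2 : (0:ℝ) ≤ ((k.factorial : ℝ)) ^ s₂ :=
                Real.rpow_nonneg (Nat.cast_nonneg _) _
              positivity
            exact mul_le_mul (mul_le_mul_of_nonneg_left pb1 hnn) pb2 hnn2 hnn3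
        _ = cW * uW l := by
            rw [hcWdef, huWdef, hC0def]
            ring
    have WC := WClaim A t r htn hrn (msize β₁) β₁ rfl Z cW hZ uW hypW
    have hpt : ∀ i, |x.1 i| ≤ t i + ∑ j, |A i j| * r j := by
      intro i
      have hx1 : x.1 i = (Lm A x).1 i - (Aop A) x.2 i := by
        show x.1 i = (x.1 i + (Aop A) x.2 i) - (Aop A) x.2 i
        ring
      rw [hx1]
      refine le_trans (abs_sub _ _) (add_le_add_right ?_ _)
      have e4 : (Aop A) x.2 i = ∑ j, A i j * x.2 j := rfl
      rw [e4]
      refine le_trans (Finset.abs_sum_le_sum_abs _ _) (le_of_eq ?_)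
      exact Finset.sum_congr rfl fun j _ => abs_mul _ _
    have hVZ : V * ‖pdm2 (α₁ + γ) δ F (Lm A x)‖
        ≤ (∏ i, (t i + ∑ j, |A i j| * r j) ^ β₁ i) * Z := by
      rw [hVdef, hZdef]
      have hprod : (∏ i, |x.1 i| ^ β₁ i) ≤ ∏ i, (t i + ∑ j, |A i j| * r j) ^ β₁ i :=
        Finset.prod_le_prod (fun i _ => by positivity)
          (fun i _ => pow_le_pow_left₀ (abs_nonneg _) (hpt i) _)
      have e5 : (∏ i, |x.2 i| ^ β₂ i) = ∏ j, r j ^ β₂ j := rfl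
      rw [e5]
      calc (∏ i, |x.1 i| ^ β₁ i) * (∏ j, r j ^ β₂ j) * ‖pdm2 (α₁ + γ) δ F (Lm A x)‖
          ≤ (∏ i, (t i + ∑ j, |A i j| * r j) ^ β₁ i) * (∏ j, r j ^ β₂ j)
            * ‖pdm2 (α₁ + γ) δ F (Lm A x)‖ := by
            refine mul_le_mul_of_nonneg_right
              (mul_le_mul_of_nonneg_right hprod (by positivity)) (norm_nonneg _)
        _ = (∏ i, (t i + ∑ j, |A i j| * r j) ^ β₁ i)
            * ((∏ j, r j ^ β₂ j) * ‖pdm2 (α₁ + γ) δ F (Lm A x)‖) := by ring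
    refine le_trans hVZ (le_trans WC (le_of_eq ?_))
    rw [hcDdef, hcWdef, huDdef, huWdef]
    ring
  have DC := DClaim A V hV x α₁ (msize α₂) F hFsm' α₂ rfl cD uD HypD
  refine le_trans DC ?_
  set m : ℕ := msize β₁ with hmdef
  set n : ℕ := msize α₂ with hndef
  have fb1 : ((m.factorial : ℝ)) ^ t₁ ≤ (((2:ℝ) ^ t₁) ^ d) ^ m * (mfact β₁ : ℝ) ^ t₁ :=
    fact_rpow_le β₁ t₁ ht₁.le
  have fb2 : ((n.factorial : ℝ)) ^ s₂ ≤ (((2:ℝ) ^ s₂) ^ d) ^ n * (mfact α₂ : ℝ) ^ s₂ :=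
    fact_rpow_le α₂ s₂ hs₂.le
  have u1 : h * (2:ℝ) ^ s₁ ≤ H := by
    have e : H = (h * (2:ℝ) ^ s₁) * ((1 + Asum A) * ((2:ℝ) ^ s₂) * ((2:ℝ) ^ t₁)
        * ((2:ℝ) ^ t₂) * (((2:ℝ) ^ s₂) ^ d) * (((2:ℝ) ^ t₁) ^ d)) := by
      rw [hHdef]; ring
    rw [e]
    refine le_mul_of_one_le_right (by have := B_pos s₁; positivity) ?_
    exact one_le_mul' (one_le_mul' (one_le_mul' (one_le_mul'
      (one_le_mul' hone hBs₂) hBt₁) hBt₂) hBs₂d) hBt₁d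
  have u2 : h * (2:ℝ) ^ t₂ ≤ H := by
    have e : H = (h * (2:ℝ) ^ t₂) * ((1 + Asum A) * ((2:ℝ) ^ s₁) * ((2:ℝ) ^ s₂)
        * ((2:ℝ) ^ t₁) * (((2:ℝ) ^ s₂) ^ d) * (((2:ℝ) ^ t₁) ^ d)) := by
      rw [hHdef]; ring
    rw [e]
    refine le_mul_of_one_le_right (by have := B_pos t₂; positivity) ?_
    exact one_le_mul' (one_le_mul' (one_le_mul' (one_le_mul'
      (one_le_mul' hone hBs₁) hBs₂) hBt₁) hBs₂d) hBt₁d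
  have u3 : (1 + Asum A) * (h * (2:ℝ) ^ t₂) * (((2:ℝ) ^ t₁) ^ d) ≤ H := by
    have e : H = ((1 + Asum A) * (h * (2:ℝ) ^ t₂) * (((2:ℝ) ^ t₁) ^ d))
        * (((2:ℝ) ^ s₁) * ((2:ℝ) ^ s₂) * ((2:ℝ) ^ t₁) * (((2:ℝ) ^ s₂) ^ d)) := by
      rw [hHdef]; ring
    rw [e]
    refine le_mul_of_one_le_right ?_ ?_
    · have b4 := B_pos t₂; have b3 := B_pos t₁
      positivity
    · exact one_le_mul' (one_le_mul' (one_le_mul' hBs₁ hBs₂) hBt₁) hBs₂d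
  have u4 : (1 + Asum A) * (h * (2:ℝ) ^ s₁) * (((2:ℝ) ^ s₂) ^ d) ≤ H := by
    have e : H = ((1 + Asum A) * (h * (2:ℝ) ^ s₁) * (((2:ℝ) ^ s₂) ^ d))
        * (((2:ℝ) ^ s₂) * ((2:ℝ) ^ t₁) * ((2:ℝ) ^ t₂) * (((2:ℝ) ^ t₁) ^ d)) := by
      rw [hHdef]; ring
    rw [e]
    refine le_mul_of_one_le_right ?_ ?_
    · have b1 := B_pos s₁; have b2 := B_pos s₂
      positivity
    · exact one_le_mul' (one_le_mul' (one_le_mul' hBs₂ hBt₁) hBt₂) hBt₁d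
  have hfin : cD * (1 + Asum A) ^ n * uD n
      ≤ C * H ^ (msize α₁ + n + m + msize β₂) * (mfact α₁ : ℝ) ^ s₁ * (mfact α₂ : ℝ) ^ s₂
        * (mfact β₁ : ℝ) ^ t₁ * (mfact β₂ : ℝ) ^ t₂ := by
    have b1 := B_pos s₁; have b2 := B_pos s₂; have b3 := B_pos t₁; have b4 := B_pos t₂
    have nn1 := mfact_rpow_nonneg α₁ s₁
    have nn2 := mfact_rpow_nonneg α₂ s₂
    have nn3 := mfact_rpow_nonneg β₁ t₁
    have nn4 := mfact_rpow_nonneg β₂ t₂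
    calc cD * (1 + Asum A) ^ n * uD n
        = (C * (h * (2:ℝ) ^ s₁) ^ (msize α₁) * (mfact α₁ : ℝ) ^ s₁
            * (h * (2:ℝ) ^ t₂) ^ (msize β₂) * (mfact β₂ : ℝ) ^ t₂)
          * ((1 + Asum A) ^ m * (h * (2:ℝ) ^ t₂) ^ m) * ((m.factorial : ℝ)) ^ t₁
          * ((1 + Asum A) ^ n * (h * (2:ℝ) ^ s₁) ^ n) * ((n.factorial : ℝ)) ^ s₂ := by
          rw [hcDdef, hC0def, huDdef]
          rw [pow_add]
          ring
      _ ≤ (C * (h * (2:ℝ) ^ s₁) ^ (msize α₁) * (mfact α₁ : ℝ) ^ s₁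
            * (h * (2:ℝ) ^ t₂) ^ (msize β₂) * (mfact β₂ : ℝ) ^ t₂)
          * ((1 + Asum A) ^ m * (h * (2:ℝ) ^ t₂) ^ m)
          * ((((2:ℝ) ^ t₁) ^ d) ^ m * (mfact β₁ : ℝ) ^ t₁)
          * ((1 + Asum A) ^ n * (h * (2:ℝ) ^ s₁) ^ n)
          * ((((2:ℝ) ^ s₂) ^ d) ^ n * (mfact α₂ : ℝ) ^ s₂) := by
          gcongr <;> positivity
      _ = C * ((1 + Asum A) ^ n * (h * (2:ℝ) ^ s₁) ^ n * ((((2:ℝ) ^ s₂) ^ d) ^ n))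
          * ((1 + Asum A) ^ m * (h * (2:ℝ) ^ t₂) ^ m * ((((2:ℝ) ^ t₁) ^ d) ^ m))
          * (h * (2:ℝ) ^ s₁) ^ (msize α₁) * (h * (2:ℝ) ^ t₂) ^ (msize β₂)
          * ((mfact α₁ : ℝ) ^ s₁ * (mfact α₂ : ℝ) ^ s₂ * (mfact β₁ : ℝ) ^ t₁
            * (mfact β₂ : ℝ) ^ t₂) := by ring
      _ ≤ C * H ^ n * H ^ m * H ^ (msize α₁) * H ^ (msize β₂)
          * ((mfact α₁ : ℝ) ^ s₁ * (mfact α₂ : ℝ) ^ s₂ * (mfact β₁ : ℝ) ^ t₁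
            * (mfact β₂ : ℝ) ^ t₂) := by
          have q4 : (1 + Asum A) ^ n * (h * (2:ℝ) ^ s₁) ^ n * ((((2:ℝ) ^ s₂) ^ d) ^ n)
              ≤ H ^ n := by
            rw [← mul_pow, ← mul_pow]
            exact pow_le_pow_left₀ (by positivity) u4 n
          have q3 : (1 + Asum A) ^ m * (h * (2:ℝ) ^ t₂) ^ m * ((((2:ℝ) ^ t₁) ^ d) ^ m)
              ≤ H ^ m := by
            rw [← mul_pow, ← mul_pow]
            exact pow_le_pow_left₀ (by positivity) u3 m
          gcongr ?_ * ?_ * ?_ * ?_ * ?_ * ?_ <;>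
            first
              | exact le_rfl
              | exact q4
              | exact q3
              | exact pow_le_pow_left₀ (by positivity) u1 _
              | exact pow_le_pow_left₀ (by positivity) u2 _
      _ = C * H ^ (msize α₁ + n + m + msize β₂) * (mfact α₁ : ℝ) ^ s₁
          * (mfact α₂ : ℝ) ^ s₂ * (mfact β₁ : ℝ) ^ t₁ * (mfact β₂ : ℝ) ^ t₂ := by
          rw [pow_add, pow_add, pow_add]
          ring
  exact hfin


end
end

section
/- Let s>0 and let ω₁, ω₂ ∈ 𝒫_s(ℝ^{2d}). Set ω₀ = ω₁ω₂ and, for R>0 and j = 0,1,2, define ω_{j,R}(X,Y) = ω_j(X) e^{-R|Y|^{1/s}} for X,Y ∈ ℝ^{2d}. Then there exist constants c>0, c₀ ≥ 0 and C>0 such that for every R>0, setting R₀ = cR + c₀, one has 1/ω_{0,R}(X,Y) ≤ C · (1/ω_{1,R₀}(X-Y+Z, Z)) · (1/ω_{2,R₀}(X+Z, Y-Z)) for all X,Y,Z ∈ ℝ^{2d}. -/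
open MeasureTheory Real Complex Finset Filter

noncomputable section

/-- The weight class `𝒫_s(ℝ^n)`: positive, measurable, moderate weights. -/
def Ps (n : ℕ) (s : ℝ) (ω : E n → ℝ) : Prop :=
  Measurable ω ∧ (∀ x, 0 < ω x) ∧ ∃ C > (0:ℝ), ∃ c > (0:ℝ), ∀ x y : E n,
    ω (x + y) ≤ C * ω x * Real.exp (c * ‖y‖ ^ (1/s))


lemma rpow_add_le_aux (a b p : ℝ) (ha : 0 ≤ a) (hb : 0 ≤ b) (hp : 0 ≤ p) :
    (a + b) ^ p ≤ 2 ^ p * (a ^ p + b ^ p) := by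
  have hm : 0 ≤ max a b := le_trans ha (le_max_left a b)
  have h1 : (a + b) ^ p ≤ (2 * max a b) ^ p := by
    apply Real.rpow_le_rpow (by linarith)
    · have := le_max_left a b; have := le_max_right a b; linarith
    · exact hp
  have h2 : (2 * max a b) ^ p = 2 ^ p * (max a b) ^ p :=
    Real.mul_rpow (by norm_num) hm
  have h3 : (max a b) ^ p ≤ a ^ p + b ^ p := by
    rcases max_cases a b with ⟨h, _⟩ | ⟨h, _⟩ <;> rw [h]
    · nlinarith [Real.rpow_nonneg hb p]
    · nlinarith [Real.rpow_nonneg ha p]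
  calc (a + b) ^ p ≤ 2 ^ p * (max a b) ^ p := h2 ▸ h1
    _ ≤ 2 ^ p * (a ^ p + b ^ p) := by
        have : (0:ℝ) ≤ 2 ^ p := Real.rpow_nonneg (by norm_num) p
        nlinarith

/-- the weight inequality for `ω₀ = ω₁ ω₂`. -/
theorem stmt17 (d : ℕ) (hd : 0 < d) (s : ℝ) (hs : 0 < s) (ω₁ ω₂ : E (2*d) → ℝ)
    (h₁ : Ps (2*d) s ω₁) (h₂ : Ps (2*d) s ω₂) :
    ∃ c > (0:ℝ), ∃ c₀ ≥ (0:ℝ), ∃ C > (0:ℝ), ∀ R > (0:ℝ), ∀ X Y Z : E (2*d),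
      (ω₁ X * ω₂ X * Real.exp (-R * ‖Y‖ ^ (1/s)))⁻¹ ≤
        C * (ω₁ (X - Y + Z) * Real.exp (-(c * R + c₀) * ‖Z‖ ^ (1/s)))⁻¹ *
            (ω₂ (X + Z) * Real.exp (-(c * R + c₀) * ‖Y - Z‖ ^ (1/s)))⁻¹ := by
  obtain ⟨-, hpos₁, C₁, hC₁, c₁, hc₁, hmod₁⟩ := h₁
  obtain ⟨-, hpos₂, C₂, hC₂, c₂, hc₂, hmod₂⟩ := h₂
  have hp : 0 < 1/s := by positivity
  refine ⟨2 ^ (1/s), Real.rpow_pos_of_pos (by norm_num) _, c₁ + c₂, by positivity,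
    C₁ * C₂, by positivity, ?_⟩
  intro R hR X Y Z
  set c : ℝ := 2 ^ (1/s) with hc_def
  have hc : 0 < c := Real.rpow_pos_of_pos (by norm_num) _
  set z := ‖Z‖ ^ (1/s) with hz_def
  set u := ‖Y - Z‖ ^ (1/s) with hu_def
  set y := ‖Y‖ ^ (1/s) with hy_def
  have hz0 : 0 ≤ z := Real.rpow_nonneg (norm_nonneg _) _
  have hu0 : 0 ≤ u := Real.rpow_nonneg (norm_nonneg _) _
  have hy : y ≤ c * (z + u) := by
    have h1 : ‖Y‖ ≤ ‖Z‖ + ‖Y - Z‖ := by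
      have e : Y = Z + (Y - Z) := by abel
      calc ‖Y‖ = ‖Z + (Y - Z)‖ := by rw [← e]
        _ ≤ ‖Z‖ + ‖Y - Z‖ := norm_add_le _ _
    calc y ≤ (‖Z‖ + ‖Y - Z‖) ^ (1/s) :=
          Real.rpow_le_rpow (norm_nonneg _) h1 hp.le
      _ ≤ c * (z + u) :=
          rpow_add_le_aux _ _ _ (norm_nonneg _) (norm_nonneg _) hp.le
  set B := ω₁ (X - Y + Z) * Real.exp (-(c * R + (c₁ + c₂)) * z) with hB_def
  set D := ω₂ (X + Z) * Real.exp (-(c * R + (c₁ + c₂)) * u) with hD_def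
  set A := ω₁ X * ω₂ X * Real.exp (-R * y) with hA_def
  have hA : 0 < A := by
    have := hpos₁ X; have := hpos₂ X; have := Real.exp_pos (-R * y); positivity
  have hB : 0 < B := by
    have := hpos₁ (X - Y + Z); have := Real.exp_pos (-(c * R + (c₁ + c₂)) * z); positivity
  have hD : 0 < D := by
    have := hpos₂ (X + Z); have := Real.exp_pos (-(c * R + (c₁ + c₂)) * u); positivity
  have hb1 : ω₁ (X - Y + Z) ≤ C₁ * ω₁ X * Real.exp (c₁ * u) := by
    have h := hmod₁ X (Z - Y)
    have e : X + (Z - Y) = X - Y + Z := by abel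
    rw [e, norm_sub_rev] at h
    exact h
  have hb2 : ω₂ (X + Z) ≤ C₂ * ω₂ X * Real.exp (c₂ * z) := hmod₂ X Z
  have key : B * D ≤ (C₁ * C₂) * A := by
    have step1 : B * D ≤
        (C₁ * ω₁ X * Real.exp (c₁ * u) * Real.exp (-(c * R + (c₁ + c₂)) * z)) *
        (C₂ * ω₂ X * Real.exp (c₂ * z) * Real.exp (-(c * R + (c₁ + c₂)) * u)) := by
      apply mul_le_mul
      · exact mul_le_mul_of_nonneg_right hb1 (Real.exp_pos _).le
      · exact mul_le_mul_of_nonneg_right hb2 (Real.exp_pos _).le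
      · exact hD.le
      · have := hpos₁ X; positivity
    have step2 :
        (C₁ * ω₁ X * Real.exp (c₁ * u) * Real.exp (-(c * R + (c₁ + c₂)) * z)) *
        (C₂ * ω₂ X * Real.exp (c₂ * z) * Real.exp (-(c * R + (c₁ + c₂)) * u)) =
        (C₁ * C₂) * (ω₁ X * ω₂ X) *
          Real.exp (c₁ * u + -(c * R + (c₁ + c₂)) * z + c₂ * z + -(c * R + (c₁ + c₂)) * u) := by
      rw [Real.exp_add, Real.exp_add, Real.exp_add]; ring
    have hexp : c₁ * u + -(c * R + (c₁ + c₂)) * z + c₂ * z + -(c * R + (c₁ + c₂)) * u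
        ≤ -R * y := by
      nlinarith [mul_le_mul_of_nonneg_left hy hR.le, mul_nonneg hc₁.le hz0,
        mul_nonneg hc₂.le hu0]
    calc B * D ≤ _ := step1
      _ = _ := step2
      _ ≤ (C₁ * C₂) * (ω₁ X * ω₂ X) * Real.exp (-R * y) := by
          have h := Real.exp_le_exp.mpr hexp
          have h0 : 0 ≤ C₁ * C₂ * (ω₁ X * ω₂ X) := by
            have := hpos₁ X; have := hpos₂ X; positivity
          exact mul_le_mul_of_nonneg_left h h0
      _ = (C₁ * C₂) * A := by rw [hA_def]; ring
  have hfinal : C₁ * C₂ * B⁻¹ * D⁻¹ = (C₁ * C₂) / (B * D) := by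
    field_simp
  rw [hfinal, inv_eq_one_div, div_le_div_iff₀ hA (by positivity)]
  linarith


end
end
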